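/- Let E ⊆ ∂T be closed with cap^T(E) > 0, and let h : T → [0,∞) be an extremal function for cap^T(E), i.e. Σ_{x∈T} h(x)² = cap^T(E) and Ih(ζ) ≥ 1 for all ζ ∈ E outside a set of tree capacity zero. Set H(x) = Σ_{y ∈ P(x)} h(y) for x ∈ T. Then for every x ∈ T with x ≠ o, h(x) = (1 − H(x⁻¹)) · cap^{T_x}(E ∩ ∂T_x), where x⁻¹ denotes the parent of x. -/

import Mathlib

/-!
Write `β = 1 - H(x⁻¹)`. On `T_x` an extremal `h` minimises the energy among all `φ` with
`H(x⁻¹) + Σ_{k ≥ d(x)} φ(ζ|k) ≥ 1` on `E ∩ ∂T_x`, since grafting such a `φ` into `h`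
gives a competitor for `cap^T(E)`. Testing this with `φ = (1 - H(x⁻¹)) δ_x` shows `H ≤ 1`;
testing it with `β φ` for `φ` admissible in `T_x`, and conversely using `h / β`, shows
`Σ_{T_x} h² = β² cap^{T_x}(E ∩ ∂T_x)`. Testing it with `u δ_x + t h` for all `u, t ≥ 0`
forces `Σ_{T_x} h² = β h(x)`, and the two identities give `h(x) = β cap^{T_x}(E ∩ ∂T_x)`.
-/

open scoped ENNReal NNReal
open Filter Topology

noncomputable section

/-- The vertex set of the dyadic tree `T`: finite binary strings. The boundary `∂T`
is the set of infinite binary sequences `ℕ → Bool`. `pre ζ k` is the prefix of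
length `k` of the boundary point `ζ`. -/
def pre (ζ : ℕ → Bool) (k : ℕ) : List Bool := List.ofFn (fun i : Fin k => ζ i)

/-- The tree condenser capacity `cap^T_n(E)`: the infimum of `Σ_x φ(x)²` over
`φ : T → [0,∞)` with `Iφ(ζ) = Σ_{x ∈ P(ζ)} φ(x) ≥ 1` on `E` and `φ(x) = 0`
whenever `d(x) ≤ n-1`.  For `n = 0` this is the tree capacity `cap^T(E)`. -/
noncomputable def treeCapN (n : ℕ) (E : Set (ℕ → Bool)) : ℝ≥0∞ :=
  sInf { c | ∃ φ : List Bool → ℝ≥0,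
    (∀ ζ ∈ E, 1 ≤ ∑' k : ℕ, (φ (pre ζ k) : ℝ≥0∞)) ∧
    (∀ x : List Bool, x.length < n → φ x = 0) ∧
    c = ∑' x : List Bool, (φ x : ℝ≥0∞) ^ 2 }

/-- The tree capacity `cap^T(E)` of a set `E ⊆ ∂T`. -/
noncomputable def treeCap (E : Set (ℕ → Bool)) : ℝ≥0∞ := treeCapN 0 E

/-- `∂T_x`: the boundary points extending the vertex `x`. -/
def bdSub (x : List Bool) : Set (ℕ → Bool) := { ζ | pre ζ x.length = x }

/-- The tree capacity `cap^{T_x}(F)` computed in the subtree `T_x` rooted at `x`: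
the sums `Iφ` are taken over the prefixes from `x` onward, and the energy is summed
over the vertices of `T_x` (the binary strings having `x` as a prefix). -/
noncomputable def treeCapAt (x : List Bool) (F : Set (ℕ → Bool)) : ℝ≥0∞ :=
  sInf { c | ∃ φ : List Bool → ℝ≥0,
    (∀ ζ ∈ F, 1 ≤ ∑' k : ℕ, (φ (pre ζ (x.length + k)) : ℝ≥0∞)) ∧
    c = ∑' y : { l : List Bool // x <+: l }, (φ y : ℝ≥0∞) ^ 2 }


@[simp] lemma pre_length (ζ : ℕ → Bool) (k : ℕ) : (pre ζ k).length = k := by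
  simp [pre]

lemma pre_take (ζ : ℕ → Bool) {k m : ℕ} (hkm : k ≤ m) : (pre ζ m).take k = pre ζ k :=
  List.ext_getElem (by simpa using hkm) fun i _ _ => by simp [pre]

lemma prefix_pre_iff {x : List Bool} {ζ : ℕ → Bool} {k : ℕ} :
    x <+: pre ζ k ↔ x.length ≤ k ∧ ζ ∈ bdSub x := by
  refine ⟨fun hx => ?_, fun ⟨hk, hζ⟩ => ?_⟩
  · have hk : x.length ≤ k := by simpa using hx.length_le
    exact ⟨hk, ((List.prefix_iff_eq_take.1 hx).trans (pre_take ζ hk)).symm⟩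
  · rw [← (show pre ζ x.length = x from hζ), ← pre_take ζ hk]
    exact List.take_prefix _ _

lemma pre_ne_of_length_lt {x : List Bool} {ζ : ℕ → Bool} {k : ℕ} (hk : x.length < k) :
    pre ζ k ≠ x := fun h => by simpa [← h] using hk.ne'

/-- The sum of `h` over the strict ancestors of `x`; for `x ≠ o` this is `H(x⁻¹)`. -/
def ancestorSum (h : List Bool → ℝ≥0) (x : List Bool) : ℝ≥0 :=
  ∑ k ∈ Finset.range x.length, h (x.take k)

lemma ancestorSum_append_singleton (h : List Bool → ℝ≥0) (x : List Bool) (b : Bool) :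
    ancestorSum h (x ++ [b]) = ancestorSum h x + h x := by
  rw [ancestorSum, List.length_append, List.length_singleton, Finset.sum_range_succ,
    List.take_append_of_le_length le_rfl, List.take_length]
  congr 1
  exact Finset.sum_congr rfl fun k hk =>
    by rw [List.take_append_of_le_length (Finset.mem_range.1 hk).le]

lemma ancestorSum_eq_sum_take_dropLast (h : List Bool → ℝ≥0) {x : List Bool} (hx : x ≠ []) :
    ancestorSum h x = ∑ k ∈ Finset.range (x.dropLast.length + 1), h (x.dropLast.take k) := by
  obtain ⟨y, b, rfl⟩ := (List.eq_nil_or_concat' x).resolve_left hx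
  rw [List.dropLast_concat, ancestorSum_append_singleton, Finset.sum_range_succ, List.take_length]
  rfl

def subtreeIntegral (x : List Bool) (φ : List Bool → ℝ≥0) (ζ : ℕ → Bool) : ℝ≥0∞ :=
  ∑' k : ℕ, (φ (pre ζ (x.length + k)) : ℝ≥0∞)

def subtreeEnergy (x : List Bool) (φ : List Bool → ℝ≥0) : ℝ≥0∞ :=
  ∑' y : { l : List Bool // x <+: l }, (φ y : ℝ≥0∞) ^ 2

lemma tsum_pre_eq_ancestorSum_add {x : List Bool} {ζ : ℕ → Bool} (hζ : ζ ∈ bdSub x)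
    (φ : List Bool → ℝ≥0) :
    ∑' k, (φ (pre ζ k) : ℝ≥0∞) = ancestorSum φ x + subtreeIntegral x φ ζ := by
  rw [← ENNReal.summable.sum_add_tsum_nat_add' (k := x.length), ancestorSum,
    ENNReal.ofNNReal_finsetSum, subtreeIntegral]
  congr 1
  · refine Finset.sum_congr rfl fun k hk => ?_
    rw [← (show pre ζ x.length = x from hζ), pre_take ζ (Finset.mem_range.1 hk).le]
  · simp_rw [add_comm]

lemma subtreeIntegral_eq_add_tsum {x : List Bool} {ζ : ℕ → Bool} (hζ : ζ ∈ bdSub x)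
    (φ : List Bool → ℝ≥0) :
    subtreeIntegral x φ ζ = φ x + ∑' k, (φ (pre ζ (x.length + (k + 1))) : ℝ≥0∞) := by
  rw [subtreeIntegral, tsum_eq_zero_add' ENNReal.summable, add_zero,
    (show pre ζ x.length = x from hζ)]

lemma subtreeIntegral_update {x : List Bool} {ζ : ℕ → Bool} (hζ : ζ ∈ bdSub x)
    (φ : List Bool → ℝ≥0) (u : ℝ≥0) :
    subtreeIntegral x (Function.update φ x u) ζ + φ x = u + subtreeIntegral x φ ζ := by
  have htail : ∀ k : ℕ, Function.update φ x u (pre ζ (x.length + (k + 1))) =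
      φ (pre ζ (x.length + (k + 1))) :=
    fun k => Function.update_of_ne (pre_ne_of_length_lt (by omega)) _ _
  rw [subtreeIntegral_eq_add_tsum hζ, subtreeIntegral_eq_add_tsum hζ, Function.update_self]
  simp only [htail]
  ring

lemma subtreeEnergy_update (x : List Bool) (φ : List Bool → ℝ≥0) (u : ℝ≥0) :
    subtreeEnergy x (Function.update φ x u) + (φ x : ℝ≥0∞) ^ 2
      = (u : ℝ≥0∞) ^ 2 + subtreeEnergy x φ := by
  let root : { l : List Bool // x <+: l } := ⟨x, List.prefix_refl x⟩
  have htail : ∀ y : { l : List Bool // x <+: l }, y ≠ root →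
      Function.update φ x u y = φ y :=
    fun y hy => Function.update_of_ne (fun h => hy (Subtype.ext h)) _ _
  rw [subtreeEnergy, subtreeEnergy, ENNReal.tsum_eq_add_tsum_ite root,
    ENNReal.tsum_eq_add_tsum_ite root
      (f := fun y : { l : List Bool // x <+: l } => (φ y : ℝ≥0∞) ^ 2)]
  simp only [root, Function.update_self]
  rw [add_assoc, add_comm _ ((φ x : ℝ≥0∞) ^ 2)]
  congr 2
  exact tsum_congr fun y => by split_ifs with hy; exacts [rfl, by rw [htail y hy]]

lemma subtreeIntegral_smul (x : List Bool) (c : ℝ≥0) (φ : List Bool → ℝ≥0)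
    (ζ : ℕ → Bool) : subtreeIntegral x (c • φ) ζ = c * subtreeIntegral x φ ζ := by
  simp only [subtreeIntegral, ← ENNReal.tsum_mul_left, Pi.smul_apply, smul_eq_mul,
    ENNReal.coe_mul]

lemma subtreeEnergy_smul (x : List Bool) (c : ℝ≥0) (φ : List Bool → ℝ≥0) :
    subtreeEnergy x (c • φ) = (c : ℝ≥0∞) ^ 2 * subtreeEnergy x φ := by
  simp only [subtreeEnergy, ← ENNReal.tsum_mul_left, Pi.smul_apply, smul_eq_mul,
    ENNReal.coe_mul, mul_pow]

lemma subtreeIntegral_mono (x : List Bool) {φ ψ : List Bool → ℝ≥0} (hφψ : φ ≤ ψ)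
    (ζ : ℕ → Bool) : subtreeIntegral x φ ζ ≤ subtreeIntegral x ψ ζ :=
  ENNReal.tsum_le_tsum fun _ => ENNReal.coe_le_coe.2 (hφψ _)

lemma subtreeEnergy_sup_le (x : List Bool) (φ ψ : List Bool → ℝ≥0) :
    subtreeEnergy x (φ ⊔ ψ) ≤ subtreeEnergy x φ + subtreeEnergy x ψ := by
  rw [subtreeEnergy, subtreeEnergy, subtreeEnergy, ← ENNReal.tsum_add]
  refine ENNReal.tsum_le_tsum fun y => ?_
  rcases le_total (φ y) (ψ y) with hle | hle
  · simp [sup_eq_right.2 hle]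
  · simp [sup_eq_left.2 hle]

lemma sq_le_subtreeEnergy (x : List Bool) (φ : List Bool → ℝ≥0) :
    (φ x : ℝ≥0∞) ^ 2 ≤ subtreeEnergy x φ :=
  ENNReal.le_tsum (f := fun y : { l : List Bool // x <+: l } => (φ y : ℝ≥0∞) ^ 2)
    ⟨x, List.prefix_refl x⟩

lemma tsum_sq_eq_add_subtreeEnergy (x : List Bool) (φ : List Bool → ℝ≥0) :
    ∑' l, (φ l : ℝ≥0∞) ^ 2
      = ∑' y : ↥({l | x <+: l}ᶜ : Set (List Bool)), (φ y : ℝ≥0∞) ^ 2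
        + subtreeEnergy x φ := by
  rw [add_comm, ← ENNReal.summable.tsum_add_tsum_compl ENNReal.summable]
  rfl

lemma subtreeIntegral_nil (φ : List Bool → ℝ≥0) (ζ : ℕ → Bool) :
    subtreeIntegral [] φ ζ = ∑' k, (φ (pre ζ k) : ℝ≥0∞) := by
  simp [subtreeIntegral]

lemma subtreeEnergy_nil (φ : List Bool → ℝ≥0) :
    subtreeEnergy [] φ = ∑' l, (φ l : ℝ≥0∞) ^ 2 :=
  (Equiv.subtypeUnivEquiv fun _ => List.nil_prefix).tsum_eq fun l => (φ l : ℝ≥0∞) ^ 2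

lemma treeCapAt_le_subtreeEnergy {x : List Bool} {F : Set (ℕ → Bool)}
    {φ : List Bool → ℝ≥0} (hφ : ∀ ζ ∈ F, 1 ≤ subtreeIntegral x φ ζ) :
    treeCapAt x F ≤ subtreeEnergy x φ :=
  sInf_le ⟨φ, hφ, rfl⟩

lemma treeCap_eq_treeCapAt_nil (F : Set (ℕ → Bool)) : treeCap F = treeCapAt [] F := by
  simp only [treeCap, treeCapN, treeCapAt, ← subtreeIntegral_nil, ← subtreeEnergy_nil,
    not_lt_zero, IsEmpty.forall_iff, implies_true, true_and]
  rfl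

lemma treeCapAt_le_subtreeEnergy_add {x : List Bool} {F N : Set (ℕ → Bool)}
    {φ : List Bool → ℝ≥0} (hφ : ∀ ζ ∈ F \ N, 1 ≤ subtreeIntegral x φ ζ) :
    treeCapAt x F ≤ subtreeEnergy x φ + treeCapAt x N := by
  conv_rhs => rw [treeCapAt, ENNReal.add_sInf]
  refine le_iInf₂ fun _ ⟨ψ, hψ, hc⟩ => hc ▸ ?_
  refine (treeCapAt_le_subtreeEnergy fun ζ hζ => ?_).trans (subtreeEnergy_sup_le x φ ψ)
  by_cases hζN : ζ ∈ N
  · exact (hψ ζ hζN).trans (subtreeIntegral_mono x le_sup_right ζ)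
  · exact (hφ ζ ⟨hζ, hζN⟩).trans (subtreeIntegral_mono x le_sup_left ζ)

lemma subtreeIntegral_update_zero {x : List Bool} {ζ : ℕ → Bool} (hζ : ζ ∈ bdSub x)
    (u : ℝ≥0) : subtreeIntegral x (Function.update 0 x u) ζ = u := by
  simpa [subtreeIntegral] using subtreeIntegral_update hζ 0 u

lemma subtreeEnergy_update_zero (x : List Bool) (u : ℝ≥0) :
    subtreeEnergy x (Function.update 0 x u) = (u : ℝ≥0∞) ^ 2 := by
  simpa [subtreeEnergy] using subtreeEnergy_update x 0 u

lemma treeCapAt_le_one {x : List Bool} {F : Set (ℕ → Bool)} (hF : F ⊆ bdSub x) :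
    treeCapAt x F ≤ 1 := by
  simpa [subtreeEnergy_update_zero] using treeCapAt_le_subtreeEnergy
    fun ζ hζ => (subtreeIntegral_update_zero (hF hζ) 1).symm.le

lemma sq_ancestorSum_add_le (φ : List Bool → ℝ≥0) (x : List Bool) :
    ((ancestorSum φ x + φ x : ℝ≥0) : ℝ≥0∞) ^ 2
      ≤ (x.length + 1) * ∑' l, (φ l : ℝ≥0∞) ^ 2 := by
  set r := Finset.range (x.length + 1)
  have hsum : ancestorSum φ x + φ x = ∑ k ∈ r, φ (x.take k) := by
    rw [ancestorSum, Finset.sum_range_succ, List.take_length]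
  have hcs : (ancestorSum φ x + φ x) ^ 2 ≤ (x.length + 1) * ∑ k ∈ r, φ (x.take k) ^ 2 := by
    simpa [hsum, r] using sq_sum_le_card_mul_sum_sq (s := r) (f := fun k => φ (x.take k))
  have hinj : Set.InjOn (fun k => x.take k) ↑r := by
    intro i hi j hj hij
    have hi : i ≤ x.length := Nat.lt_succ_iff.1 (Finset.mem_range.1 hi)
    have hj : j ≤ x.length := Nat.lt_succ_iff.1 (Finset.mem_range.1 hj)
    simpa [List.length_take_of_le hi, List.length_take_of_le hj] using congrArg List.length hij
  have hpath : ∑ k ∈ r, (φ (x.take k) : ℝ≥0∞) ^ 2 ≤ ∑' l, (φ l : ℝ≥0∞) ^ 2 :=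
    (Finset.sum_image (f := fun l => (φ l : ℝ≥0∞) ^ 2) hinj).symm.le.trans
      (ENNReal.sum_le_tsum _)
  calc ((ancestorSum φ x + φ x : ℝ≥0) : ℝ≥0∞) ^ 2
      ≤ (x.length + 1) * ∑ k ∈ r, (φ (x.take k) : ℝ≥0∞) ^ 2 := by exact_mod_cast hcs
    _ ≤ (x.length + 1) * ∑' l, (φ l : ℝ≥0∞) ^ 2 := by gcongr

/-- The mass of an admissible function on the ancestors of `x` is moved onto `x`. -/
lemma treeCapAt_inter_bdSub_le (x : List Bool) (F : Set (ℕ → Bool)) :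
    treeCapAt x (F ∩ bdSub x) ≤ (x.length + 2) * treeCapAt [] F := by
  have hk0 : ((x.length : ℝ≥0∞) + 2) ≠ 0 := by positivity
  have hktop : ((x.length : ℝ≥0∞) + 2) ≠ ⊤ := by simp
  rw [mul_comm, ← ENNReal.div_le_iff hk0 hktop]
  refine le_sInf fun _ ⟨φ, hφ, hc⟩ => hc ▸ ?_
  rw [ENNReal.div_le_iff hk0 hktop]
  set ψ := Function.update φ x (ancestorSum φ x + φ x)
  have hψ : ∀ ζ ∈ F ∩ bdSub x, 1 ≤ subtreeIntegral x ψ ζ := by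
    intro ζ ⟨hζF, hζx⟩
    have hI := subtreeIntegral_update hζx φ (ancestorSum φ x + φ x)
    rw [ENNReal.coe_add, add_right_comm, ENNReal.add_left_inj ENNReal.coe_ne_top,
      ← tsum_pre_eq_ancestorSum_add hζx, ← subtreeIntegral_nil] at hI
    exact hI ▸ hφ ζ hζF
  have hfull : subtreeEnergy x φ ≤ subtreeEnergy [] φ := by
    rw [subtreeEnergy_nil, tsum_sq_eq_add_subtreeEnergy x]
    exact le_add_self
  calc treeCapAt x (F ∩ bdSub x) ≤ subtreeEnergy x ψ := treeCapAt_le_subtreeEnergy hψ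
    _ ≤ subtreeEnergy x ψ + (φ x : ℝ≥0∞) ^ 2 := le_self_add
    _ = ((ancestorSum φ x + φ x : ℝ≥0) : ℝ≥0∞) ^ 2 + subtreeEnergy x φ :=
        subtreeEnergy_update x φ _
    _ ≤ (x.length + 1) * subtreeEnergy [] φ + subtreeEnergy [] φ := by
        rw [subtreeEnergy_nil] at hfull ⊢
        exact add_le_add (sq_ancestorSum_add_le φ x) hfull
    _ = subtreeEnergy [] φ * (x.length + 2) := by ring

lemma treeCapAt_inter_bdSub_eq_zero {N : Set (ℕ → Bool)} (hN : treeCap N = 0) (x : List Bool) :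
    treeCapAt x (N ∩ bdSub x) = 0 := by
  refine le_antisymm ?_ zero_le
  simpa [← treeCap_eq_treeCapAt_nil, hN] using treeCapAt_inter_bdSub_le x N

def replaceSubtree (h : List Bool → ℝ≥0) (x : List Bool) (φ : List Bool → ℝ≥0) :
    List Bool → ℝ≥0 :=
  fun l => if x <+: l then φ l else h l

lemma tsum_replaceSubtree_of_mem (h φ : List Bool → ℝ≥0) {x : List Bool} {ζ : ℕ → Bool}
    (hζ : ζ ∈ bdSub x) :
    ∑' k, (replaceSubtree h x φ (pre ζ k) : ℝ≥0∞)
      = ancestorSum h x + subtreeIntegral x φ ζ := by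
  rw [tsum_pre_eq_ancestorSum_add hζ]
  congr 1
  · refine congrArg _ (Finset.sum_congr rfl fun k hk => if_neg fun hx => ?_)
    have := hx.length_le.trans (List.length_take_le k x)
    exact absurd (Finset.mem_range.1 hk) (by omega)
  · refine tsum_congr fun k => ?_
    rw [replaceSubtree, if_pos (prefix_pre_iff.2 ⟨by omega, hζ⟩)]

lemma tsum_replaceSubtree_of_notMem (h φ : List Bool → ℝ≥0) {x : List Bool}
    {ζ : ℕ → Bool} (hζ : ζ ∉ bdSub x) :
    ∑' k, (replaceSubtree h x φ (pre ζ k) : ℝ≥0∞) = ∑' k, (h (pre ζ k) : ℝ≥0∞) :=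
  tsum_congr fun k => by rw [replaceSubtree, if_neg fun hx => hζ (prefix_pre_iff.1 hx).2]

lemma tsum_sq_replaceSubtree (h φ : List Bool → ℝ≥0) (x : List Bool) :
    ∑' l, (replaceSubtree h x φ l : ℝ≥0∞) ^ 2
      = ∑' y : ↥({l | x <+: l}ᶜ : Set (List Bool)), (h y : ℝ≥0∞) ^ 2
        + subtreeEnergy x φ := by
  rw [tsum_sq_eq_add_subtreeEnergy x]
  congr 1
  · exact tsum_congr fun y => by rw [replaceSubtree, if_neg (show ¬x <+: y from y.2)]
  · exact tsum_congr fun y => by rw [replaceSubtree, if_pos y.2]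

/-- The quadratic `u² + t² (e - a²)` on the half-plane `u + t b ≥ a + b` can only be minimal
at `(u, t) = (a, 1)` if `e = a (a + b)`: compare with the competitor proportional to
`(e - a², b)`, which leaves a nonpositive square `(a b - (e - a²))²`. -/
lemma eq_mul_add_of_forall_le {a b e : ℝ≥0} (hae : a ^ 2 ≤ e)
    (H : ∀ u t : ℝ≥0, a + b ≤ u + t * b → e + t ^ 2 * a ^ 2 ≤ u ^ 2 + t ^ 2 * e) :
    e = a * (a + b) := by
  obtain ⟨D, rfl⟩ : ∃ D, e = a ^ 2 + D := ⟨e - a ^ 2, (add_tsub_cancel_of_le hae).symm⟩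
  suffices hD : D = a * b by rw [hD]; ring
  rcases eq_or_ne (b ^ 2 + D) 0 with h0 | h0
  · obtain ⟨hb, hD⟩ := add_eq_zero.1 h0
    simp [pow_eq_zero_iff two_ne_zero |>.1 hb, hD]
  set s := (a + b) / (b ^ 2 + D)
  have hs : s * (b ^ 2 + D) = a + b := div_mul_cancel₀ _ h0
  have hcomp := H (s * D) (s * b) (le_of_eq (by rw [← hs]; ring))
  have hsR : (s : ℝ) * (b ^ 2 + D) = a + b := by exact_mod_cast hs
  have hcompR : (a : ℝ) ^ 2 + D ≤ s * (a + b) * D := by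
    have hcomp' : (a : ℝ) ^ 2 + D + (s * b) ^ 2 * a ^ 2
        ≤ (s * D) ^ 2 + (s * b) ^ 2 * (a ^ 2 + D) := mod_cast hcomp
    have hexp : ((s : ℝ) * D) ^ 2 + (s * b) ^ 2 * (a ^ 2 + D)
        = (s * b) ^ 2 * a ^ 2 + s * D * (s * (b ^ 2 + D)) := by ring
    rw [hexp, hsR] at hcomp'
    linarith
  have hprod : ((a : ℝ) ^ 2 + D) * (b ^ 2 + D) ≤ (a + b) ^ 2 * D :=
    calc ((a : ℝ) ^ 2 + D) * (b ^ 2 + D) ≤ (s : ℝ) * (a + b) * D * (b ^ 2 + D) := by gcongr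
      _ = ((a : ℝ) + b) * D * (s * (b ^ 2 + D)) := by ring
      _ = ((a : ℝ) + b) ^ 2 * D := by rw [hsR]; ring
  have hsq : ((a : ℝ) * b - D) ^ 2 = 0 :=
    le_antisymm (by linarith [show ((a : ℝ) * b - D) ^ 2
      = (a ^ 2 + D) * (b ^ 2 + D) - (a + b) ^ 2 * D by ring]) (sq_nonneg _)
  exact_mod_cast (sub_eq_zero.1 (pow_eq_zero_iff two_ne_zero |>.1 hsq)).symm

lemma one_le_add_subtreeIntegral_update_smul {x : List Bool} {ζ : ℕ → Bool}
    (hζ : ζ ∈ bdSub x) {h : List Bool → ℝ≥0} {p b u t : ℝ≥0} (hp : p + (h x + b) = 1)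
    (hut : h x + b ≤ u + t * b) (hI : 1 ≤ p + subtreeIntegral x h ζ) :
    1 ≤ p + subtreeIntegral x (Function.update (t • h) x u) ζ := by
  have hIφ := subtreeIntegral_update hζ (t • h) u
  rw [subtreeIntegral_smul, Pi.smul_apply, smul_eq_mul] at hIφ
  have hIh : ((h x + b : ℝ≥0) : ℝ≥0∞) ≤ subtreeIntegral x h ζ := by
    rwa [← ENNReal.add_le_add_iff_left (a := (p : ℝ≥0∞)) ENNReal.coe_ne_top,
      ← ENNReal.coe_add, hp, ENNReal.coe_one]
  set ta : ℝ≥0 := t * h x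
  refine (ENNReal.add_le_add_iff_right (a := (ta : ℝ≥0∞)) ENNReal.coe_ne_top).1 ?_
  calc 1 + (ta : ℝ≥0∞) = (p + (h x + b) + ta : ℝ≥0) := by
        rw [hp, ENNReal.coe_add, ENNReal.coe_one]
    _ ≤ (p + (u + t * (h x + b)) : ℝ≥0) := by
        rw [ENNReal.coe_le_coe]
        calc p + (h x + b) + ta ≤ p + (u + t * b) + ta := by gcongr
          _ = p + (u + t * (h x + b)) := by ring
    _ ≤ p + (u + t * subtreeIntegral x h ζ) := by
        rw [ENNReal.coe_add, ENNReal.coe_add, ENNReal.coe_mul]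
        gcongr
    _ = p + subtreeIntegral x (Function.update (t • h) x u) ζ + ta := by
        rw [← hIφ, add_assoc]

structure IsExtremal (E : Set (ℕ → Bool)) (h : List Bool → ℝ≥0) : Prop where
  energy_eq : ∑' x, (h x : ℝ≥0∞) ^ 2 = treeCap E
  admissible_off_null : ∃ N : Set (ℕ → Bool), treeCap N = 0 ∧
    ∀ ζ ∈ E \ N, 1 ≤ ∑' k, (h (pre ζ k) : ℝ≥0∞)

namespace IsExtremal

variable {E : Set (ℕ → Bool)} {h : List Bool → ℝ≥0}

lemma energy_ne_top (hh : IsExtremal E h) : ∑' x, (h x : ℝ≥0∞) ^ 2 ≠ ⊤ := by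
  rw [hh.energy_eq, treeCap_eq_treeCapAt_nil]
  exact ne_top_of_le_ne_top ENNReal.one_ne_top (treeCapAt_le_one fun ζ _ => by simp [bdSub, pre])

lemma subtreeEnergy_ne_top (hh : IsExtremal E h) (x : List Bool) : subtreeEnergy x h ≠ ⊤ :=
  ne_top_of_le_ne_top hh.energy_ne_top (tsum_sq_eq_add_subtreeEnergy x h ▸ le_add_self)

/-- Grafting `φ` into `h` on `T_x` gives a competitor for `cap^T(E)`. -/
lemma subtreeEnergy_le (hh : IsExtremal E h) (x : List Bool) {φ : List Bool → ℝ≥0}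
    (hφ : ∀ ζ ∈ E ∩ bdSub x, 1 ≤ ancestorSum h x + subtreeIntegral x h ζ →
      1 ≤ ancestorSum h x + subtreeIntegral x φ ζ) :
    subtreeEnergy x h ≤ subtreeEnergy x φ := by
  obtain ⟨N, hN, hadm⟩ := hh.admissible_off_null
  have hg : ∀ ζ ∈ E \ N, 1 ≤ subtreeIntegral [] (replaceSubtree h x φ) ζ := by
    intro ζ hζ
    rw [subtreeIntegral_nil]
    by_cases hζx : ζ ∈ bdSub x
    · rw [tsum_replaceSubtree_of_mem h φ hζx]
      exact hφ ζ ⟨hζ.1, hζx⟩ (tsum_pre_eq_ancestorSum_add hζx h ▸ hadm ζ hζ)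
    · exact (tsum_replaceSubtree_of_notMem h φ hζx).symm ▸ hadm ζ hζ
  have hcap := treeCapAt_le_subtreeEnergy_add hg
  rw [← treeCap_eq_treeCapAt_nil, ← treeCap_eq_treeCapAt_nil, hN, add_zero, subtreeEnergy_nil,
    tsum_sq_replaceSubtree, ← hh.energy_eq, tsum_sq_eq_add_subtreeEnergy x] at hcap
  refine (ENNReal.add_le_add_iff_left (ne_top_of_le_ne_top hh.energy_ne_top ?_)).1 hcap
  exact tsum_sq_eq_add_subtreeEnergy x h ▸ le_self_add

lemma ancestorSum_add_le_one_of_le_one (hh : IsExtremal E h) {x : List Bool}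
    (hx : ancestorSum h x ≤ 1) : ancestorSum h x + h x ≤ 1 := by
  by_contra! hlt
  have hsmall : subtreeEnergy x h ≤ ((1 - ancestorSum h x : ℝ≥0) : ℝ≥0∞) ^ 2 := by
    refine subtreeEnergy_update_zero x (1 - ancestorSum h x) ▸ hh.subtreeEnergy_le x
      fun ζ hζ _ => ?_
    rw [subtreeIntegral_update_zero hζ.2, ← ENNReal.coe_add, add_tsub_cancel_of_le hx,
      ENNReal.coe_one]
  have hlt' : 1 - ancestorSum h x < h x := tsub_lt_iff_left hx |>.2 hlt
  exact (sq_le_subtreeEnergy x h |>.trans hsmall).not_gt (by gcongr)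

lemma ancestorSum_le_one (hh : IsExtremal E h) (x : List Bool) : ancestorSum h x ≤ 1 := by
  induction x using List.reverseRecOn with
  | nil => simp [ancestorSum]
  | append_singleton x b ih =>
    exact ancestorSum_append_singleton h x b ▸ hh.ancestorSum_add_le_one_of_le_one ih

lemma ancestorSum_add_le_one (hh : IsExtremal E h) (x : List Bool) :
    ancestorSum h x + h x ≤ 1 :=
  hh.ancestorSum_add_le_one_of_le_one (hh.ancestorSum_le_one x)

lemma subtreeEnergy_le_mul_treeCapAt (hh : IsExtremal E h) {x : List Bool}
    (hx : ancestorSum h x < 1) :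
    subtreeEnergy x h
      ≤ ((1 - ancestorSum h x : ℝ≥0) : ℝ≥0∞) ^ 2 * treeCapAt x (E ∩ bdSub x) := by
  set β := 1 - ancestorSum h x
  have hβ0 : ((β : ℝ≥0∞) ^ 2) ≠ 0 :=
    pow_ne_zero 2 (ENNReal.coe_ne_zero.2 (tsub_pos_of_lt hx).ne')
  have hβtop : ((β : ℝ≥0∞) ^ 2) ≠ ⊤ := by simp
  rw [mul_comm, ← ENNReal.div_le_iff hβ0 hβtop]
  refine le_sInf fun _ ⟨φ, hφ, hc⟩ => ?_
  rw [hc, ENNReal.div_le_iff hβ0 hβtop, mul_comm]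
  change _ ≤ _ * subtreeEnergy x φ
  rw [← subtreeEnergy_smul]
  refine hh.subtreeEnergy_le x fun ζ hζ _ => ?_
  calc (1 : ℝ≥0∞) = ancestorSum h x + β * 1 := by
        rw [mul_one, ← ENNReal.coe_add, add_tsub_cancel_of_le hx.le, ENNReal.coe_one]
    _ ≤ ancestorSum h x + subtreeIntegral x (β • φ) ζ := by
        rw [subtreeIntegral_smul]
        gcongr
        exact hφ ζ hζ

/-- `h / β` is admissible for `E ∩ ∂T_x` outside `N ∩ ∂T_x`, which is null in `T_x`. -/
lemma mul_treeCapAt_le_subtreeEnergy (hh : IsExtremal E h) {x : List Bool}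
    (hx : ancestorSum h x < 1) :
    ((1 - ancestorSum h x : ℝ≥0) : ℝ≥0∞) ^ 2 * treeCapAt x (E ∩ bdSub x)
      ≤ subtreeEnergy x h := by
  obtain ⟨N, hN, hadm⟩ := hh.admissible_off_null
  set β := 1 - ancestorSum h x
  have hβ : β ≠ 0 := (tsub_pos_of_lt hx).ne'
  have hψ : ∀ ζ ∈ (E ∩ bdSub x) \ (N ∩ bdSub x),
      1 ≤ subtreeIntegral x (β⁻¹ • h) ζ := by
    intro ζ ⟨⟨hζE, hζx⟩, hζN⟩
    have hI : (β : ℝ≥0∞) ≤ subtreeIntegral x h ζ := by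
      rw [ENNReal.coe_sub, ENNReal.coe_one, tsub_le_iff_left, ← tsum_pre_eq_ancestorSum_add hζx]
      exact hadm ζ ⟨hζE, fun hζN' => hζN ⟨hζN', hζx⟩⟩
    calc (1 : ℝ≥0∞) = (β⁻¹ : ℝ≥0) * β := by
          rw [← ENNReal.coe_mul, inv_mul_cancel₀ hβ, ENNReal.coe_one]
      _ ≤ subtreeIntegral x (β⁻¹ • h) ζ := by rw [subtreeIntegral_smul]; gcongr
  have hcap := treeCapAt_le_subtreeEnergy_add hψ
  rw [treeCapAt_inter_bdSub_eq_zero hN, add_zero, subtreeEnergy_smul] at hcap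
  calc (β : ℝ≥0∞) ^ 2 * treeCapAt x (E ∩ bdSub x)
      ≤ (β : ℝ≥0∞) ^ 2 * ((β⁻¹ : ℝ≥0) ^ 2 * subtreeEnergy x h) := by gcongr
    _ = subtreeEnergy x h := by
        rw [← mul_assoc, ← mul_pow, ← ENNReal.coe_mul, mul_inv_cancel₀ hβ, ENNReal.coe_one,
          one_pow, one_mul]

/-- Test `subtreeEnergy_le` against `u δ_x + t h` on `T_x`. -/
lemma subtreeEnergy_eq_mul (hh : IsExtremal E h) (x : List Bool) :
    subtreeEnergy x h = h x * (1 - ancestorSum h x : ℝ≥0) := by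
  set p := ancestorSum h x
  set b := 1 - p - h x
  have hab : h x + b = 1 - p :=
    add_tsub_cancel_of_le (le_tsub_of_add_le_left (hh.ancestorSum_add_le_one x))
  have hp : p + (h x + b) = 1 := by rw [hab, add_tsub_cancel_of_le (hh.ancestorSum_le_one x)]
  obtain ⟨e, he⟩ : ∃ e : ℝ≥0, (e : ℝ≥0∞) = subtreeEnergy x h :=
    ⟨_, ENNReal.coe_toNNReal (hh.subtreeEnergy_ne_top x)⟩
  rw [← he, ← hab, ← ENNReal.coe_mul, ENNReal.coe_inj]
  refine eq_mul_add_of_forall_le (by exact_mod_cast he ▸ sq_le_subtreeEnergy x h)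
    fun u t hut => ?_
  have hmin := hh.subtreeEnergy_le x (φ := Function.update (t • h) x u)
    fun ζ hζ => one_le_add_subtreeIntegral_update_smul hζ.2 hp hut
  have hE := subtreeEnergy_update x (t • h) u
  rw [subtreeEnergy_smul, Pi.smul_apply, smul_eq_mul, ← he] at hE
  have key : (e : ℝ≥0∞) + ((t * h x : ℝ≥0) : ℝ≥0∞) ^ 2
      ≤ (u : ℝ≥0∞) ^ 2 + (t : ℝ≥0∞) ^ 2 * e :=
    hE ▸ add_le_add_left (he ▸ hmin) _
  rw [← mul_pow]
  exact_mod_cast key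

lemma apply_eq_mul_treeCapAt (hh : IsExtremal E h) (x : List Bool) :
    h x = (1 - ancestorSum h x) * (treeCapAt x (E ∩ bdSub x)).toNNReal := by
  rcases (hh.ancestorSum_le_one x).eq_or_lt with hx | hx
  · have := hh.ancestorSum_add_le_one x
    rw [hx] at this ⊢
    simpa using this
  set β := 1 - ancestorSum h x
  have hβ : (β : ℝ≥0∞) ≠ 0 := ENNReal.coe_ne_zero.2 (tsub_pos_of_lt hx).ne'
  have hsq := (hh.mul_treeCapAt_le_subtreeEnergy hx).antisymm (hh.subtreeEnergy_le_mul_treeCapAt hx)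
  rw [hh.subtreeEnergy_eq_mul x, pow_two, mul_assoc, mul_comm (h x : ℝ≥0∞),
    ENNReal.mul_right_inj hβ ENNReal.coe_ne_top] at hsq
  rw [← ENNReal.toNNReal_coe (r := h x), ← hsq, ENNReal.toNNReal_mul, ENNReal.toNNReal_coe]

end IsExtremal

theorem extremal_function_subtree_identity_general
    (E : Set (ℕ → Bool))
    (h : List Bool → ℝ≥0)
    (hen : (∑' x : List Bool, (h x : ℝ≥0∞) ^ 2) = treeCap E)
    (hadm : ∃ N : Set (ℕ → Bool), treeCap N = 0 ∧
      ∀ ζ ∈ E \ N, 1 ≤ ∑' k : ℕ, (h (pre ζ k) : ℝ≥0∞)) :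
    ∀ x : List Bool, x ≠ [] →
      (h x : ℝ)
        = (1 - ∑ k ∈ Finset.range (x.dropLast.length + 1), (h (x.dropLast.take k) : ℝ))
            * (treeCapAt x (E ∩ bdSub x)).toReal := by
  intro x hx
  have hh : IsExtremal E h := ⟨hen, hadm⟩
  rw [hh.apply_eq_mul_treeCapAt x, NNReal.coe_mul, NNReal.coe_sub (hh.ancestorSum_le_one x),
    ancestorSum_eq_sum_take_dropLast h hx]
  push_cast
  rfl

/-- Let `E ⊆ ∂T` be closed with `cap^T(E) > 0` and let `h` be an
extremal function for `cap^T(E)`, i.e. `Σ_x h(x)² = cap^T(E)` and `Ih(ζ) ≥ 1` for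
all `ζ ∈ E` outside a set of tree capacity zero. With
`H(x) = Σ_{y ∈ P(x)} h(y)`, for every `x ≠ o` one has
`h(x) = (1 - H(x⁻¹)) · cap^{T_x}(E ∩ ∂T_x)`, where `x⁻¹` is the parent of `x`
(here `x⁻¹ = x.dropLast` and `H(x⁻¹)` is the sum of `h` over the prefixes of `x⁻¹`,
including `x⁻¹` itself). -/
theorem extremal_function_subtree_identity
    (E : Set (ℕ → Bool)) (hE : IsClosed E) (hpos : 0 < treeCap E)
    (h : List Bool → ℝ≥0)
    (hen : (∑' x : List Bool, (h x : ℝ≥0∞) ^ 2) = treeCap E)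
    (hadm : ∃ N : Set (ℕ → Bool), treeCap N = 0 ∧
      ∀ ζ ∈ E \ N, 1 ≤ ∑' k : ℕ, (h (pre ζ k) : ℝ≥0∞)) :
    ∀ x : List Bool, x ≠ [] →
      (h x : ℝ)
        = (1 - ∑ k ∈ Finset.range (x.dropLast.length + 1), (h (x.dropLast.take k) : ℝ))
            * (treeCapAt x (E ∩ bdSub x)).toReal :=
  extremal_function_subtree_identity_general E h hen hadm
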